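/- If G is a connected triangle-free graph on n ≥ 3 vertices, then γ_rdR(G) ≤ 2·γ_rR(G) − 2. -/

import Mathlib

open Finset

/-- A restrained double Roman dominating function. -/
def IsRDRD {V : Type*} (G : SimpleGraph V) (f : V → ℕ) : Prop :=
  (∀ v, f v ≤ 3) ∧
  (∀ v, f v = 0 →
    (∃ u, G.Adj v u ∧ f u = 3) ∨
    (∃ u w, G.Adj v u ∧ G.Adj v w ∧ u ≠ w ∧ f u = 2 ∧ f w = 2)) ∧
  (∀ v, f v = 1 → ∃ u, G.Adj v u ∧ 2 ≤ f u) ∧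
  (∀ v, f v = 0 → ∃ u, G.Adj v u ∧ f u = 0)

/-- The restrained double Roman domination number. -/
noncomputable def rdrNum {V : Type*} [Fintype V] (G : SimpleGraph V) : ℕ :=
  sInf {k | ∃ f : V → ℕ, IsRDRD G f ∧ ∑ v, f v = k}

def IsDomSet {V : Type*} (G : SimpleGraph V) (S : Set V) : Prop :=
  ∀ v ∉ S, ∃ u ∈ S, G.Adj v u

def IsRDomSet {V : Type*} (G : SimpleGraph V) (S : Set V) : Prop :=
  IsDomSet G S ∧ ∀ v ∉ S, ∃ u ∉ S, G.Adj v u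

def IsR2DomSet {V : Type*} (G : SimpleGraph V) (S : Set V) : Prop :=
  (∀ v ∉ S, ∃ u w, u ∈ S ∧ w ∈ S ∧ u ≠ w ∧ G.Adj v u ∧ G.Adj v w) ∧
  ∀ v ∉ S, ∃ u ∉ S, G.Adj v u

noncomputable def domNum {V : Type*} [Fintype V] (G : SimpleGraph V) : ℕ :=
  sInf {k | ∃ S : Finset V, IsDomSet G ↑S ∧ S.card = k}

noncomputable def rDomNum {V : Type*} [Fintype V] (G : SimpleGraph V) : ℕ :=
  sInf {k | ∃ S : Finset V, IsRDomSet G ↑S ∧ S.card = k}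

noncomputable def r2DomNum {V : Type*} [Fintype V] (G : SimpleGraph V) : ℕ :=
  sInf {k | ∃ S : Finset V, IsR2DomSet G ↑S ∧ S.card = k}

/-- A restrained Roman dominating function. -/
def IsRRD {V : Type*} (G : SimpleGraph V) (f : V → ℕ) : Prop :=
  (∀ v, f v ≤ 2) ∧
  (∀ v, f v = 0 → ∃ u, G.Adj v u ∧ f u = 2) ∧
  (∀ v, f v = 0 → ∃ u, G.Adj v u ∧ f u = 0)

noncomputable def rrNum {V : Type*} [Fintype V] (G : SimpleGraph V) : ℕ :=
  sInf {k | ∃ f : V → ℕ, IsRRD G f ∧ ∑ v, f v = k}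

/-- A star: all edges are incident to one common vertex. -/
def IsStar {V : Type*} (G : SimpleGraph V) : Prop :=
  ∃ x : V, ∀ ⦃a b : V⦄, G.Adj a b → a = x ∨ b = x

/-- The join of two graphs. -/
def joinG {α β : Type*} (G : SimpleGraph α) (H : SimpleGraph β) : SimpleGraph (α ⊕ β) :=
  SimpleGraph.fromRel (fun x y => match x, y with
    | Sum.inl a, Sum.inl b => G.Adj a b
    | Sum.inr a, Sum.inr b => H.Adj a b
    | Sum.inl _, Sum.inr _ => True
    | Sum.inr _, Sum.inl _ => True)

/-- The disjoint union of two graphs. -/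
def dUnion {α β : Type*} (G : SimpleGraph α) (H : SimpleGraph β) : SimpleGraph (α ⊕ β) :=
  SimpleGraph.fromRel (fun x y => match x, y with
    | Sum.inl a, Sum.inl b => G.Adj a b
    | Sum.inr a, Sum.inr b => H.Adj a b
    | _, _ => False)

/-
Take a minimum restrained Roman dominating function `f`. If `f` has a zero, triangle-freeness
forces two vertices of value 2 (two adjacent zeros cannot share their 2-neighbour), and mapping
`0, 1, 2 ↦ 0, 2, 3` gives a restrained double Roman dominating function of weight
`2 w(f) - #{f = 2} ≤ 2 w(f) - 2`. Otherwise `w(f) ≥ n`; a connected graph on at least three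
vertices has a vertex `x` of degree at least two, and assigning `1` to the neighbours of `x` and
`2` elsewhere gives weight `2n - deg x ≤ 2n - 2`.
-/

namespace SimpleGraph

variable {V : Type*}

lemma Connected.exists_two_le_degree [Fintype V] {G : SimpleGraph V} [DecidableRel G.Adj]
    (hconn : G.Connected) (hn : 3 ≤ Fintype.card V) : ∃ x, 2 ≤ G.degree x := by
  by_contra! hdeg
  have hedges := hconn.card_vert_le_card_edgeSet_add_one
  rw [Nat.card_eq_fintype_card, Nat.card_eq_fintype_card, ← edgeFinset_card] at hedges
  have hsum : ∑ v, G.degree v ≤ ∑ _v : V, 1 :=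
    Finset.sum_le_sum fun v _ => Nat.le_of_lt_succ (hdeg v)
  rw [G.sum_degrees_eq_twice_card_edges, Finset.sum_const, Finset.card_univ, smul_eq_mul,
    mul_one] at hsum
  omega

lemma rdrNum_le_sum [Fintype V] {G : SimpleGraph V} {g : V → ℕ} (hg : IsRDRD G g) :
    rdrNum G ≤ ∑ v, g v :=
  Nat.sInf_le ⟨g, hg, rfl⟩

lemma exists_isRRD_sum_eq_rrNum [Fintype V] (G : SimpleGraph V) :
    ∃ f : V → ℕ, IsRRD G f ∧ ∑ v, f v = rrNum G :=
  Nat.sInf_mem (s := {k | ∃ f : V → ℕ, IsRRD G f ∧ ∑ v, f v = k})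
    ⟨_, fun _ => 1, ⟨fun _ => by norm_num, fun _ h => by simp at h, fun _ h => by simp at h⟩,
      rfl⟩

def doubleRomanLift (f : V → ℕ) (v : V) : ℕ :=
  if f v = 0 then 0 else if f v = 1 then 2 else 3

lemma doubleRomanLift_eq_zero_iff {f : V → ℕ} {v : V} :
    doubleRomanLift f v = 0 ↔ f v = 0 := by
  unfold doubleRomanLift
  split_ifs <;> simp_all

lemma sum_doubleRomanLift_add_card [Fintype V] {f : V → ℕ} (hf : ∀ v, f v ≤ 2) :
    ∑ v, doubleRomanLift f v + #{v | f v = 2} = 2 * ∑ v, f v := by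
  rw [Finset.card_filter, ← Finset.sum_add_distrib, Finset.mul_sum]
  refine Finset.sum_congr rfl fun v _ => ?_
  have := hf v
  unfold doubleRomanLift
  split_ifs <;> omega

namespace IsRRD

variable {G : SimpleGraph V} {f : V → ℕ}

lemma isRDRD_doubleRomanLift (hf : IsRRD G f) : IsRDRD G (doubleRomanLift f) := by
  obtain ⟨-, hdom, hrestr⟩ := hf
  refine ⟨fun v => ?_, fun v hv => ?_, fun v hv => ?_, fun v hv => ?_⟩
  · unfold doubleRomanLift; split_ifs <;> omega
  · obtain ⟨u, hvu, hu⟩ := hdom v (doubleRomanLift_eq_zero_iff.mp hv)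
    exact Or.inl ⟨u, hvu, by simp [doubleRomanLift, hu]⟩
  · unfold doubleRomanLift at hv; split_ifs at hv <;> simp at hv
  · obtain ⟨u, hvu, hu⟩ := hrestr v (doubleRomanLift_eq_zero_iff.mp hv)
    exact ⟨u, hvu, doubleRomanLift_eq_zero_iff.mpr hu⟩

lemma one_lt_card_filter_eq_two [Fintype V] (hfree : G.CliqueFree 3) (hf : IsRRD G f) {v : V}
    (hv : f v = 0) : 1 < #{v | f v = 2} := by
  obtain ⟨-, hdom, hrestr⟩ := hf
  obtain ⟨u, hvu, hu⟩ := hdom v hv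
  obtain ⟨w, hvw, hw⟩ := hrestr v hv
  obtain ⟨u', hwu', hu'⟩ := hdom w hw
  refine Finset.one_lt_card.mpr ⟨u, by simpa using hu, u', by simpa using hu', ?_⟩
  rintro rfl
  classical
  exact hfree _ (is3Clique_triple_iff.mpr ⟨hvw, hvu, hwu'⟩)

end IsRRD

variable (G : SimpleGraph V) [DecidableRel G.Adj]

def neighborDoubleRoman (x v : V) : ℕ :=
  if G.Adj x v then 1 else 2

lemma isRDRD_neighborDoubleRoman (x : V) : IsRDRD G (G.neighborDoubleRoman x) := by
  have hzero (v : V) : G.neighborDoubleRoman x v ≠ 0 := by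
    unfold neighborDoubleRoman; split_ifs <;> simp
  refine ⟨fun v => ?_, fun v hv => absurd hv (hzero v), fun v hv => ?_,
    fun v hv => absurd hv (hzero v)⟩
  · unfold neighborDoubleRoman; split_ifs <;> omega
  · have hxv : G.Adj x v := by by_contra h; simp [neighborDoubleRoman, h] at hv
    exact ⟨x, hxv.symm, by simp [neighborDoubleRoman]⟩

lemma sum_neighborDoubleRoman_add_degree [Fintype V] (x : V) :
    ∑ v, G.neighborDoubleRoman x v + G.degree x = 2 * Fintype.card V := by
  rw [← card_neighborFinset_eq_degree, neighborFinset_eq_filter, Finset.card_filter,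
    ← Finset.sum_add_distrib, ← Finset.card_univ, Finset.card_eq_sum_ones, Finset.mul_sum]
  refine Finset.sum_congr rfl fun v _ => ?_
  unfold neighborDoubleRoman
  split_ifs <;> rfl

end SimpleGraph

open SimpleGraph in
theorem stmt_7 {V : Type*} [Fintype V] (G : SimpleGraph V)
    (hconn : G.Connected) (hfree : G.CliqueFree 3) (hn : 3 ≤ Fintype.card V) :
    rdrNum G ≤ 2 * rrNum G - 2 := by
  classical
  obtain ⟨f, hf, hsum⟩ := G.exists_isRRD_sum_eq_rrNum
  by_cases hzero : ∃ v, f v = 0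
  · obtain ⟨v, hv⟩ := hzero
    have htwos := hf.one_lt_card_filter_eq_two hfree hv
    have hlift := rdrNum_le_sum hf.isRDRD_doubleRomanLift
    have hweight := sum_doubleRomanLift_add_card hf.1
    omega
  · push Not at hzero
    have hcard : Fintype.card V ≤ ∑ v, f v := by
      simpa using Finset.univ.card_nsmul_le_sum f 1 fun v _ => Nat.one_le_iff_ne_zero.mpr (hzero v)
    obtain ⟨x, hx⟩ := hconn.exists_two_le_degree hn
    have hstar := rdrNum_le_sum (G.isRDRD_neighborDoubleRoman x)
    have hweight := G.sum_neighborDoubleRoman_add_degree x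
    omega
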